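/- arXiv:1405.3460 — 6 statements merged into one kernel-verified Lean document; each statement's English description precedes it below -/
import Mathlib

section
/- Let C : {0,1}^n → {0,1} be a monotonic collective decision making model on a set V of n actors. Then for every actor i ∈ V, SAT(i) = 2^{n-1} + BZ(i), where BZ is the Banzhaf value. -/
/-!
Pair every decision vector `x` with `x i = false` with `x' = update x i true`. Actor `i` is
satisfied at `x` iff `C x = false` and at `x'` iff `C x' = true`; as `C x ≤ C x'` by
monotonicity, each of the `2^(n-1)` pairs contributes exactly one satisfied vector, plus one
more precisely when `x` is a swing (`C x = false`, `C x' = true`). Swings correspond to the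
coalitions counted by `BZ C i` via `x ↦ x'`.
-/

open Finset

/-- The satisfaction score of actor `i` under a collective decision making
model `C : {0,1}^n → {0,1}`: the number of initial decision vectors `x`
for which the collective decision coincides with `x i`. -/
def SAT {n : ℕ} (C : (Fin n → Bool) → Bool) (i : Fin n) : ℕ :=
  (Finset.univ.filter (fun x : Fin n → Bool => C x = x i)).card

/-- The Banzhaf value of actor `i`: the number of coalitions `X` such that `X`
is winning but `X \ {i}` is not. -/
def BZ {n : ℕ} (C : (Fin n → Bool) → Bool) (i : Fin n) : ℕ :=
  (Finset.univ.filter (fun X : Finset (Fin n) =>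
    C (fun j => decide (j ∈ X)) = true ∧ C (fun j => decide (j ∈ X.erase i)) = false)).card

open Function

section

variable {ι : Type*} [Fintype ι] [DecidableEq ι]

theorem sum_eq_sum_filter_apply_eq_false_add_update {M : Type*} [AddCommMonoid M] (i : ι)
    (g : (ι → Bool) → M) :
    ∑ x, g x = ∑ x with x i = false, (g x + g (update x i true)) := by
  rw [← sum_filter_add_sum_filter_not univ (fun x => x i = false), sum_add_distrib]
  congr 1
  refine sum_nbij' (update · i false) (update · i true) ?_ ?_ ?_ ?_ ?_ <;> simp
  all_goals intro x hx; simp [← hx]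

theorem card_filter_apply_eq_false (i : ι) :
    #{x : ι → Bool | x i = false} = 2 ^ (Fintype.card ι - 1) := by
  have h := sum_eq_sum_filter_apply_eq_false_add_update i (fun _ => 1)
  simp only [sum_const, card_univ, Fintype.card_pi, Fintype.card_bool, prod_const, smul_eq_mul] at h
  obtain ⟨k, hk⟩ := Nat.exists_eq_add_one.2 (Fintype.card_pos_iff.2 ⟨i⟩)
  rw [hk, pow_succ] at h
  simpa [hk] using h.symm

def finsetEquivBoolFun : Finset ι ≃ (ι → Bool) where
  toFun X j := decide (j ∈ X)
  invFun x := {j | x j = true}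
  left_inv X := by ext; simp
  right_inv x := by ext; simp

def swings (C : (ι → Bool) → Bool) (i : ι) : Finset (ι → Bool) :=
  {x | x i = false ∧ C x = false ∧ C (update x i true) = true}

theorem card_swings (C : (ι → Bool) → Bool) (i : ι) :
    #(swings C i) = ∑ x with x i = false,
      if C x = false ∧ C (update x i true) = true then 1 else 0 := by
  rw [← card_filter, filter_filter, swings]

theorem card_filter_eq_apply_eq_add_card_swings (C : (ι → Bool) → Bool) (i : ι)
    (hmono : ∀ x, C x ≤ C (update x i true)) :
    #{x | C x = x i} = #{x : ι → Bool | x i = false} + #(swings C i) := by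
  have pair : ∀ a b : Bool, a ≤ b → ((if a = false then 1 else 0) + if b = true then 1 else 0)
      = 1 + if a = false ∧ b = true then 1 else 0 := by decide
  rw [card_filter, sum_eq_sum_filter_apply_eq_false_add_update i, card_swings, card_eq_sum_ones,
    ← sum_add_distrib]
  refine sum_congr rfl fun x hx => ?_
  rw [(mem_filter.1 hx).2, update_self]
  exact pair _ _ (hmono x)

def pivots (C : (ι → Bool) → Bool) (i : ι) : Finset (ι → Bool) :=
  {x | C x = true ∧ C (update x i false) = false}

theorem card_pivots_eq_card_swings (C : (ι → Bool) → Bool) (i : ι) :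
    #(pivots C i) = #(swings C i) := by
  rw [pivots, card_filter, sum_eq_sum_filter_apply_eq_false_add_update i, card_swings]
  refine sum_congr rfl fun x hx => ?_
  have hx0 : update x i false = x := by rw [← (mem_filter.1 hx).2, update_eq_self]
  rw [update_idem, hx0]
  cases C x <;> simp

end

theorem BZ_eq_card_pivots {n : ℕ} (C : (Fin n → Bool) → Bool) (i : Fin n) :
    BZ C i = #(pivots C i) := by
  refine card_equiv finsetEquivBoolFun fun X => ?_
  have : (fun j => decide (j ∈ X.erase i)) = update (finsetEquivBoolFun X) i false := by
    ext j; by_cases j = i <;> simp_all [finsetEquivBoolFun]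
  simp only [mem_filter, mem_univ, true_and, pivots, this]
  rfl

/-- For any monotonic collective decision making model `C` on `n` actors,
`SAT(i) = 2^(n-1) + BZ(i)` for every actor `i`. -/
theorem sat_eq_pow_add_banzhaf (n : ℕ) (C : (Fin n → Bool) → Bool)
    (hmono : ∀ x y : Fin n → Bool, (∀ j, x j ≤ y j) → C x ≤ C y)
    (i : Fin n) :
    SAT C i = 2 ^ (n - 1) + BZ C i := by
  have hmono_i : ∀ x, C x ≤ C (update x i true) := fun x =>
    hmono _ _ fun j => by by_cases j = i <;> simp_all
  rw [SAT, card_filter_eq_apply_eq_add_card_swings C i hmono_i, card_filter_apply_eq_false,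
    Fintype.card_fin, BZ_eq_card_pivots, card_pivots_eq_card_swings]
end

section
/- Let S be an OLFM system on an odd number n of actors, with collective decision function C_S obtained by applying the unanimity rule layer by layer, followed by simple majority. Then C_S is monotonic with respect to inclusion: if x, y ∈ {0,1}^n satisfy x_j ≤ y_j for all j, then C_S(x) ≤ C_S(y). -/
open Finset

/-- The set of predecessors of `i` in the digraph with edge set `E`. -/
def preds {n : ℕ} (E : Finset (Fin n × Fin n)) (i : Fin n) : Finset (Fin n) :=
  Finset.univ.filter (fun j => (j, i) ∈ E)

/-- The set of successors of `i` in the digraph with edge set `E`. -/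
def succs {n : ℕ} (E : Finset (Fin n × Fin n)) (i : Fin n) : Finset (Fin n) :=
  Finset.univ.filter (fun j => (i, j) ∈ E)

/-- `E` is the edge set of an OLF system: every edge runs from a vertex with no
predecessors (an opinion leader) to a vertex with no successors (a follower). -/
def IsOLF {n : ℕ} (E : Finset (Fin n × Fin n)) : Prop :=
  ∀ e ∈ E, preds E e.1 = ∅ ∧ succs E e.2 = ∅

/-- One step of the unanimity rule: actor `i` adopts the common decision of its
predecessors (as recorded in `c`) if they are nonempty and unanimous, and keeps
its own initial decision `x i` otherwise. -/
def unanStep {n : ℕ} (E : Finset (Fin n × Fin n)) (x c : Fin n → Bool) (i : Fin n) : Bool :=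
  if (preds E i).Nonempty ∧ ∀ j ∈ preds E i, c j = true then true
  else if (preds E i).Nonempty ∧ ∀ j ∈ preds E i, c j = false then false
  else x i

/-- The collective decision vector of an OLF system. -/
def olfVec {n : ℕ} (E : Finset (Fin n × Fin n)) (x : Fin n → Bool) : Fin n → Bool :=
  unanStep E x x

/-- Simple majority over a decision vector. -/
def majority {n : ℕ} (c : Fin n → Bool) : Bool :=
  decide ((Finset.univ.filter (fun i => c i = true)).card >
          (Finset.univ.filter (fun i => c i = false)).card)

/-- The collective decision function of an OLF system. -/
def olfC {n : ℕ} (E : Finset (Fin n × Fin n)) (x : Fin n → Bool) : Bool :=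
  majority (olfVec E x)

/-- `layer` witnesses that `E` is a layered digraph: every edge goes from a
vertex in some layer to a vertex in the layer immediately below. -/
def IsLayered {n : ℕ} (E : Finset (Fin n × Fin n)) (layer : Fin n → ℕ) : Prop :=
  ∀ e ∈ E, layer e.2 = layer e.1 + 1

/-- `E` is the edge set of an OLFM system, i.e. a layered digraph. -/
def IsOLFM {n : ℕ} (E : Finset (Fin n × Fin n)) : Prop :=
  ∃ layer : Fin n → ℕ, IsLayered E layer

/-- The collective decision vector of an OLFM system, computed layer by layer:
since each layer only depends on the one above it, iterating the unanimity step
`n` times computes the stable, layer-by-layer collective decision vector. -/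
def olfmVec {n : ℕ} (E : Finset (Fin n × Fin n)) (x : Fin n → Bool) : Fin n → Bool :=
  (fun c => unanStep E x c)^[n] x

/-- The collective decision function of an OLFM system. -/
def olfmC {n : ℕ} (E : Finset (Fin n × Fin n)) (x : Fin n → Bool) : Bool :=
  majority (olfmVec E x)

/-!
A unanimity step is monotone both in the initial decisions and in the decisions it reads off the
predecessors, so its `n`-fold iterate, the collective decision vector, is monotone in the initial
decisions; simple majority is monotone too.
-/

section

variable {n : ℕ} (E : Finset (Fin n × Fin n))

theorem unanStep_le_unanStep {x y c d : Fin n → Bool} (hxy : x ≤ y) (hcd : c ≤ d) :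
    unanStep E x c ≤ unanStep E y d := by
  intro i
  have up : (∀ j ∈ preds E i, c j = true) → ∀ j ∈ preds E i, d j = true := fun h j hj => by
    simpa [h j hj, Bool.le_iff_imp] using hcd j
  have down : (∀ j ∈ preds E i, d j = false) → ∀ j ∈ preds E i, c j = false := fun h j hj => by
    simpa [h j hj, Bool.le_iff_imp] using hcd j
  unfold unanStep
  split_ifs <;> simp_all [hxy i]

theorem unanStep_monotone (x : Fin n → Bool) : Monotone (unanStep E x) :=
  fun _ _ => unanStep_le_unanStep E le_rfl

theorem olfmVec_monotone : Monotone (olfmVec E) := fun x y hxy =>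
  calc olfmVec E x ≤ (unanStep E x)^[n] y := (unanStep_monotone E x).iterate n hxy
    _ ≤ (unanStep E y)^[n] y :=
      (unanStep_monotone E x).iterate_le_of_le (fun _ => unanStep_le_unanStep E hxy le_rfl) n y

end

theorem majority_monotone {n : ℕ} : Monotone (majority (n := n)) := by
  intro c d hcd
  have trues : #{i | c i = true} ≤ #{i | d i = true} :=
    card_le_card <| monotone_filter_right _ fun i _ hc => by
      simpa [hc, Bool.le_iff_imp] using hcd i
  have falses : #{i | d i = false} ≤ #{i | c i = false} :=
    card_le_card <| monotone_filter_right _ fun i _ hd => by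
      simpa [hd, Bool.le_iff_imp] using hcd i
  simp only [majority, Bool.le_iff_imp, decide_eq_true_eq]
  omega

theorem olfm_monotone_general (n : ℕ) (E : Finset (Fin n × Fin n))
    (x y : Fin n → Bool) (hxy : ∀ j, x j ≤ y j) :
    olfmC E x ≤ olfmC E y :=
  majority_monotone (olfmVec_monotone E hxy)

/-- The collective decision function of an OLFM system on an odd number of
actors is monotonic with respect to inclusion. -/
theorem olfm_monotone (n : ℕ) (hn : Odd n) (E : Finset (Fin n × Fin n))
    (layer : Fin n → ℕ) (hL : IsLayered E layer)
    (x y : Fin n → Bool) (hxy : ∀ j, x j ≤ y j) :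
    olfmC E x ≤ olfmC E y :=
  olfm_monotone_general n E x y hxy
end

section
/- Let S be an OLF system on an odd number n of actors with collective decision function C_S. If actor i has exactly one predecessor, then i is a dummy for C_S, and consequently SAT_S(i) = 2^{n-1}. -/
/-!
An actor `i` with a single predecessor `j` copies `x j` in the collective vector, and since `i`
has a predecessor it is a follower, so it is nobody's predecessor. Hence the collective decision
does not depend on `x i` at all. Flipping the coordinate `i` is then an involution of `{0,1}^n`
exchanging the profiles where `i` is satisfied with those where it is not, so `i` is satisfied
in exactly half of them.
-/

open Finset

open Function

section OLF

variable {n : ℕ} {E : Finset (Fin n × Fin n)}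

theorem IsOLF.notMem_preds (hE : IsOLF E) {i : Fin n} (hi : (preds E i).Nonempty) (k : Fin n) :
    i ∉ preds E k := by
  intro hik
  have hik : (i, k) ∈ E := by simpa [preds] using hik
  simp [(hE _ hik).1] at hi

theorem unanStep_congr {x y c d : Fin n → Bool} {k : Fin n} (hx : x k = y k)
    (hc : ∀ j ∈ preds E k, c j = d j) : unanStep E x c k = unanStep E y d k := by
  have hunan (b : Bool) : (∀ j ∈ preds E k, c j = b) ↔ ∀ j ∈ preds E k, d j = b :=
    forall₂_congr fun j hj => by rw [hc j hj]
  simp only [unanStep, hunan, hx]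

theorem unanStep_of_preds_eq_singleton {x c : Fin n → Bool} {j k : Fin n}
    (h : preds E k = {j}) : unanStep E x c k = c j := by
  cases hcj : c j <;> simp [unanStep, h, hcj]

theorem olfC_update_of_card_preds_eq_one (hE : IsOLF E) {i : Fin n} (hP : (preds E i).card = 1)
    (x : Fin n → Bool) (b : Bool) : olfC E (update x i b) = olfC E x := by
  obtain ⟨j, hj⟩ := card_eq_one.mp hP
  have hi : ∀ k, i ∉ preds E k := hE.notMem_preds (hj ▸ singleton_nonempty j)
  have hji : j ≠ i := by
    rintro rfl
    exact hi j (hj ▸ mem_singleton_self j)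
  unfold olfC olfVec
  congr 1
  funext k
  by_cases hk : k = i
  · subst hk
    rw [unanStep_of_preds_eq_singleton hj, unanStep_of_preds_eq_singleton hj, update_of_ne hji]
  · exact unanStep_congr (update_of_ne hk _ _)
      fun l hl => update_of_ne (ne_of_mem_of_not_mem hl (hi k)) _ _

end OLF

theorem SAT_eq_of_update {n : ℕ} {C : (Fin n → Bool) → Bool} {i : Fin n}
    (hC : ∀ x b, C (update x i b) = C x) : SAT C i = 2 ^ (n - 1) := by
  let flip (x : Fin n → Bool) : Fin n → Bool := update x i (!x i)
  have hflip (x : Fin n → Bool) : flip (flip x) = x := by simp [flip]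
  have hsat : SAT C i = #(univ.filter fun x : Fin n → Bool => ¬C x = x i) := by
    refine card_nbij' flip flip ?_ ?_ (fun x _ => hflip x) (fun x _ => hflip x) <;>
      intro x hx <;> cases h : x i <;> simp_all [flip]
  have hn : 2 ^ n = 2 * 2 ^ (n - 1) := by
    rw [← pow_succ', Nat.sub_add_cancel i.pos]
  have htotal := card_filter_add_card_filter_not (s := univ) fun x : Fin n → Bool => C x = x i
  rw [card_univ, Fintype.card_fun, Fintype.card_bool, Fintype.card_fin] at htotal
  unfold SAT at hsat ⊢
  omega

theorem olf_one_pred_dummy_general (n : ℕ) (E : Finset (Fin n × Fin n)) (hE : IsOLF E)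
    (i : Fin n) (hP : (preds E i).card = 1) :
    (∀ X : Finset (Fin n),
      olfC E (fun j => decide (j ∈ X)) = true →
      olfC E (fun j => decide (j ∈ X.erase i)) = true) ∧
    SAT (olfC E) i = 2 ^ (n - 1) := by
  have hC := olfC_update_of_card_preds_eq_one hE hP
  refine ⟨fun X hX => ?_, SAT_eq_of_update hC⟩
  have herase : (fun j => decide (j ∈ X.erase i)) = update (fun j => decide (j ∈ X)) i false := by
    funext j
    by_cases hj : j = i <;> simp [hj]
  rw [herase, hC, hX]

/-- In an OLF system on an odd number `n` of actors, an actor with exactly one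
predecessor is a dummy, and consequently its satisfaction score is `2^(n-1)`. -/
theorem olf_one_pred_dummy (n : ℕ) (hn : Odd n) (E : Finset (Fin n × Fin n)) (hE : IsOLF E)
    (i : Fin n) (hP : (preds E i).card = 1) :
    (∀ X : Finset (Fin n),
      olfC E (fun j => decide (j ∈ X)) = true →
      olfC E (fun j => decide (j ∈ X.erase i)) = true) ∧
    SAT (olfC E) i = 2 ^ (n - 1) :=
  olf_one_pred_dummy_general n E hE i hP
end

section
/- (Symmetry for OLF) Let S be an OLF system on an odd number n of actors, and let i and j be distinct actors with the same set of successors and the same set of predecessors, i.e., S(i) = S(j) and P(i) = P(j). Then SAT_S(i) = SAT_S(j). -/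
open Finset

/-! Swapping two actors with the same predecessors and the same successors is an automorphism of
the influence graph. Relabelling an initial decision vector along a graph automorphism relabels
the collective decision vector the same way, and majority is invariant under relabelling, so
`x ↦ x ∘ swap i j` is a bijection from the profiles where `j` agrees with the collective decision
onto those where `i` does. -/

lemma majority_comp_perm {n : ℕ} (c : Fin n → Bool) (σ : Equiv.Perm (Fin n)) :
    majority (c ∘ σ) = majority c := by
  have hcard : ∀ b, #{k | c (σ k) = b} = #{k | c k = b} := fun b => card_equiv σ (by simp)
  simp only [majority, Function.comp_apply, hcard]

lemma SAT_apply_eq_of_comp_eq {n : ℕ} (C : (Fin n → Bool) → Bool) (σ : Equiv.Perm (Fin n))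
    (hC : ∀ x, C (x ∘ σ) = C x) (i : Fin n) : SAT C (σ i) = SAT C i :=
  card_nbij' (· ∘ σ) (· ∘ σ.symm) (fun x hx => by simpa [hC] using hx)
    (fun y hy => by simpa [← hC (y ∘ σ.symm), Function.comp_assoc] using hy)
    (fun x _ => by ext; simp) (fun y _ => by ext; simp)

section Automorphism

variable {n : ℕ} {E : Finset (Fin n × Fin n)}

@[simp]
lemma mem_preds {l k : Fin n} : l ∈ preds E k ↔ (l, k) ∈ E := by
  simp [preds]

@[simp]
lemma mem_succs {l k : Fin n} : k ∈ succs E l ↔ (l, k) ∈ E := by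
  simp [succs]

def IsAutomorphism (E : Finset (Fin n × Fin n)) (σ : Equiv.Perm (Fin n)) : Prop :=
  ∀ l k, (σ l, σ k) ∈ E ↔ (l, k) ∈ E

lemma isAutomorphism_swap {i j : Fin n} (hsucc : succs E i = succs E j)
    (hpred : preds E i = preds E j) : IsAutomorphism E (Equiv.swap i j) := by
  intro l k
  calc (Equiv.swap i j l, Equiv.swap i j k) ∈ E
      ↔ Equiv.swap i j k ∈ succs E (Equiv.swap i j l) := mem_succs.symm
    _ ↔ Equiv.swap i j k ∈ succs E l := by rw [Equiv.apply_swap_eq_self hsucc]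
    _ ↔ l ∈ preds E (Equiv.swap i j k) := by rw [mem_succs, mem_preds]
    _ ↔ l ∈ preds E k := by rw [Equiv.apply_swap_eq_self hpred]
    _ ↔ (l, k) ∈ E := mem_preds

variable {σ : Equiv.Perm (Fin n)}

lemma IsAutomorphism.preds_apply (hσ : IsAutomorphism E σ) (k : Fin n) :
    preds E (σ k) = (preds E k).map σ.toEmbedding := by
  ext l
  obtain ⟨l, rfl⟩ := σ.surjective l
  simp [hσ l k]

lemma IsAutomorphism.olfVec_comp (hσ : IsAutomorphism E σ) (x : Fin n → Bool) :
    olfVec E (x ∘ σ) = olfVec E x ∘ σ := by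
  funext k
  simp only [olfVec, unanStep, Function.comp_apply, hσ.preds_apply, map_nonempty,
    forall_mem_map, Equiv.coe_toEmbedding]

lemma IsAutomorphism.olfC_comp (hσ : IsAutomorphism E σ) (x : Fin n → Bool) :
    olfC E (x ∘ σ) = olfC E x := by
  rw [olfC, hσ.olfVec_comp, majority_comp_perm, olfC]

end Automorphism

theorem olf_symmetry_general (n : ℕ) (E : Finset (Fin n × Fin n))
    (i j : Fin n)
    (hsucc : succs E i = succs E j) (hpred : preds E i = preds E j) :
    SAT (olfC E) i = SAT (olfC E) j := by
  have hσ := isAutomorphism_swap hsucc hpred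
  simpa using (SAT_apply_eq_of_comp_eq (olfC E) _ hσ.olfC_comp j)

/-- Symmetry for OLF systems: two distinct actors with the same sets of
successors and predecessors have the same satisfaction score. -/
theorem olf_symmetry (n : ℕ) (hn : Odd n) (E : Finset (Fin n × Fin n)) (hE : IsOLF E)
    (i j : Fin n) (hij : i ≠ j)
    (hsucc : succs E i = succs E j) (hpred : preds E i = preds E j) :
    SAT (olfC E) i = SAT (olfC E) j :=
  olf_symmetry_general n E i j hsucc hpred
end

section
/- (Equal gain property for OLF) Let S and S' be two OLF systems on the same odd number n of actors with the same vertex set, where in S actor i is an opinion leader or independent actor, actor j is a follower, and E(G') = E(G) ∪ {(i,j)}. Then SAT_{S'}(i) - SAT_S(i) = SAT_{S'}(j) - SAT_S(j). -/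
open Finset

lemma preds_insert_ne {n : ℕ} (E : Finset (Fin n × Fin n)) (i j k : Fin n) (h : k ≠ j) :
    preds (insert (i, j) E) k = preds E k := by
  ext m
  simp [preds, Prod.ext_iff]
  tauto

lemma preds_insert_self {n : ℕ} (E : Finset (Fin n × Fin n)) (i j : Fin n) :
    preds (insert (i, j) E) j = insert i (preds E j) := by
  ext m
  simp [preds, Prod.ext_iff]

lemma step_j {n : ℕ} (P : Finset (Fin n)) (hP : P.Nonempty) (i : Fin n) (x : Fin n → Bool)
    (b : Bool) (hxx : x i ≠ b) :
    (if (insert i P).Nonempty ∧ ∀ m ∈ insert i P, x m = true then true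
     else if (insert i P).Nonempty ∧ ∀ m ∈ insert i P, x m = false then false
     else b)
    = (if P.Nonempty ∧ ∀ m ∈ P, x m = true then true
       else if P.Nonempty ∧ ∀ m ∈ P, x m = false then false
       else b) := by
  obtain ⟨m0, hm0⟩ := hP
  have hP' : P.Nonempty := ⟨m0, hm0⟩
  by_cases h1 : ∀ m ∈ P, x m = true
  · by_cases hxi : x i = true
    · have hins : (insert i P).Nonempty ∧ ∀ m ∈ insert i P, x m = true :=
        ⟨Finset.insert_nonempty _ _, fun m hm => by
          rcases Finset.mem_insert.mp hm with h | h
          · subst h; exact hxi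
          · exact h1 m h⟩
      rw [if_pos hins, if_pos ⟨hP', h1⟩]
    · have hb : b = true := by
        cases hbv : b
        · cases hx : x i
          · exact absurd (hx.trans hbv.symm) hxx
          · exact absurd hx hxi
        · rfl
      have hA : ¬((insert i P).Nonempty ∧ ∀ m ∈ insert i P, x m = true) :=
        fun h => hxi (h.2 i (Finset.mem_insert_self _ _))
      have hB : ¬((insert i P).Nonempty ∧ ∀ m ∈ insert i P, x m = false) := by
        intro h
        have h' := h.2 m0 (Finset.mem_insert_of_mem hm0)
        rw [h1 m0 hm0] at h'
        exact Bool.noConfusion h'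
      rw [if_neg hA, if_neg hB, if_pos ⟨hP', h1⟩, hb]
  · by_cases h0 : ∀ m ∈ P, x m = false
    · have hA : ¬((insert i P).Nonempty ∧ ∀ m ∈ insert i P, x m = true) := by
        intro h
        have h' := h.2 m0 (Finset.mem_insert_of_mem hm0)
        rw [h0 m0 hm0] at h'
        exact Bool.noConfusion h'
      by_cases hxi : x i = false
      · have hins : (insert i P).Nonempty ∧ ∀ m ∈ insert i P, x m = false :=
          ⟨Finset.insert_nonempty _ _, fun m hm => by
            rcases Finset.mem_insert.mp hm with h | h
            · subst h; exact hxi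
            · exact h0 m h⟩
        rw [if_neg hA, if_pos hins, if_neg (fun h => h1 h.2), if_pos ⟨hP', h0⟩]
      · have hb : b = false := by
          cases hbv : b
          · rfl
          · cases hx : x i
            · exact absurd hx hxi
            · exact absurd (hx.trans hbv.symm) hxx
        have hB : ¬((insert i P).Nonempty ∧ ∀ m ∈ insert i P, x m = false) :=
          fun h => hxi (h.2 i (Finset.mem_insert_self _ _))
        rw [if_neg hA, if_neg hB, if_neg (fun h => h1 h.2), if_pos ⟨hP', h0⟩, hb]
    · have hA : ¬((insert i P).Nonempty ∧ ∀ m ∈ insert i P, x m = true) :=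
        fun h => h1 (fun m hm => h.2 m (Finset.mem_insert_of_mem hm))
      have hB : ¬((insert i P).Nonempty ∧ ∀ m ∈ insert i P, x m = false) :=
        fun h => h0 (fun m hm => h.2 m (Finset.mem_insert_of_mem hm))
      rw [if_neg hA, if_neg hB, if_neg (fun h => h1 h.2), if_neg (fun h => h0 h.2)]

/-- If `x i ≠ x j`, adding the edge `(i, j)` does not change the collective vector. -/
lemma olfVec_insert_eq {n : ℕ} (E : Finset (Fin n × Fin n)) (i j : Fin n)
    (hjP : (preds E j).Nonempty) (x : Fin n → Bool) (hxx : x i ≠ x j) :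
    olfVec (insert (i, j) E) x = olfVec E x := by
  funext k
  by_cases hk : k = j
  · subst hk
    unfold olfVec unanStep
    rw [preds_insert_self]
    exact step_j (preds E k) hjP i x (x k) hxx
  · unfold olfVec unanStep
    rw [preds_insert_ne E i j k hk]

/-- Equal gain property for OLF systems: if `i` is an opinion leader or
independent actor, `j` is a follower, and the second system is obtained by
adding the edge `(i, j)`, then `i` and `j` gain the same amount of satisfaction. -/
theorem olf_equal_gain (n : ℕ) (hn : Odd n) (E : Finset (Fin n × Fin n)) (hE : IsOLF E)
    (i j : Fin n) (hij : i ≠ j)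
    (hi : preds E i = ∅)
    (hjP : (preds E j).Nonempty) (hjS : succs E j = ∅)
    (hE' : IsOLF (insert (i, j) E)) :
    (SAT (olfC (insert (i, j) E)) i : ℤ) - SAT (olfC E) i =
      (SAT (olfC (insert (i, j) E)) j : ℤ) - SAT (olfC E) j := by
  have hsum : ∀ (C : (Fin n → Bool) → Bool) (k : Fin n),
      (SAT C k : ℤ) = ∑ x : Fin n → Bool, (if C x = x k then (1 : ℤ) else 0) := by
    intro C k
    unfold SAT
    rw [Finset.card_filter]
    push_cast
    rfl
  rw [hsum, hsum, hsum, hsum, ← Finset.sum_sub_distrib, ← Finset.sum_sub_distrib]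
  apply Finset.sum_congr rfl
  intro x _
  by_cases hxx : x i = x j
  · rw [hxx]
  · have hv : olfC (insert (i, j) E) x = olfC E x := by
      unfold olfC
      rw [olfVec_insert_eq E i j hjP x hxx]
    rw [hv]
    ring
end

section
/- (Opposite gain property for OLF) Let S and S' be two OLF systems on the same odd number n of actors with the same vertex set, where in S actor i is an opinion leader or independent actor, actor j is an independent actor, and E(G') = E(G) ∪ {(i,j)}. Then SAT_{S'}(i) - SAT_S(i) = SAT_S(j) - SAT_{S'}(j). -/
open Finset

/-!
Adding the edge `(i, j)` only changes the collective decision at profiles with `x i ≠ x j`,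
where `j` now copies `x i`. At such a profile exactly one of `i` and `j` agrees with the outcome,
whatever it is, so the combined satisfaction `SAT i + SAT j` is the same in both systems.
-/

section Satisfaction

variable {n : ℕ} (C C' : (Fin n → Bool) → Bool) (i j : Fin n)

lemma SAT_add_SAT_eq_sum :
    SAT C i + SAT C j =
      ∑ x : Fin n → Bool, ((if C x = x i then 1 else 0) + (if C x = x j then 1 else 0)) := by
  simp only [SAT, card_filter, sum_add_distrib]

lemma SAT_add_SAT_eq_of_agree (h : ∀ x : Fin n → Bool, x i = x j → C' x = C x) :
    SAT C' i + SAT C' j = SAT C i + SAT C j := by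
  rw [SAT_add_SAT_eq_sum, SAT_add_SAT_eq_sum]
  refine sum_congr rfl fun x _ => ?_
  by_cases hx : x i = x j
  · rw [h x hx]
  · have hxj : x j = !x i := Bool.eq_not.mpr (Ne.symm hx)
    rw [hxj]
    cases C x <;> cases C' x <;> cases x i <;> rfl

end Satisfaction

section Unanimity

variable {n : ℕ} {E : Finset (Fin n × Fin n)} {i j : Fin n} (x : Fin n → Bool)

lemma olfVec_of_preds_eq_empty {k : Fin n} (hk : preds E k = ∅) : olfVec E x k = x k := by
  simp [olfVec, unanStep, hk]

lemma olfVec_of_preds_eq_singleton {k : Fin n} (hk : preds E k = {i}) : olfVec E x k = x i := by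
  cases hx : x i <;> simp [olfVec, unanStep, hk, hx]

lemma preds_insert_of_ne {k : Fin n} (hk : k ≠ j) : preds (insert (i, j) E) k = preds E k := by
  ext a
  simp [preds, hk]

lemma preds_insert_of_preds_eq_empty (hj : preds E j = ∅) :
    preds (insert (i, j) E) j = {i} := by
  ext a
  have ha : (a, j) ∉ E := fun h => eq_empty_iff_forall_notMem.mp hj a (by simp [preds, h])
  simp [preds, ha]

lemma olfVec_insert_of_preds_eq_empty (hj : preds E j = ∅) :
    olfVec (insert (i, j) E) x = Function.update (olfVec E x) j (x i) := by
  funext k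
  rcases eq_or_ne k j with rfl | hk
  · simpa using olfVec_of_preds_eq_singleton x (preds_insert_of_preds_eq_empty hj)
  · simp [Function.update_of_ne hk, olfVec, unanStep, preds_insert_of_ne hk]

lemma olfC_insert_of_eq (hj : preds E j = ∅) (hx : x i = x j) :
    olfC (insert (i, j) E) x = olfC E x := by
  rw [olfC, olfC, olfVec_insert_of_preds_eq_empty x hj, hx, ← olfVec_of_preds_eq_empty x hj,
    Function.update_eq_self]

end Unanimity

theorem olf_opposite_gain_general (n : ℕ) (E : Finset (Fin n × Fin n))
    (i j : Fin n)
    (hjP : preds E j = ∅) :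
    (SAT (olfC (insert (i, j) E)) i : ℤ) - SAT (olfC E) i =
      (SAT (olfC E) j : ℤ) - SAT (olfC (insert (i, j) E)) j := by
  have h := SAT_add_SAT_eq_of_agree (olfC E) (olfC (insert (i, j) E)) i j
    fun x hx => olfC_insert_of_eq x hjP hx
  omega

/-- Opposite gain property for OLF systems: if `i` is an opinion leader or
independent actor, `j` is an independent actor, and the second system is
obtained by adding the edge `(i, j)`, then the gain of `i` equals the loss of `j`. -/
theorem olf_opposite_gain (n : ℕ) (hn : Odd n) (E : Finset (Fin n × Fin n)) (hE : IsOLF E)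
    (i j : Fin n) (hij : i ≠ j)
    (hi : preds E i = ∅)
    (hjP : preds E j = ∅) (hjS : succs E j = ∅)
    (hE' : IsOLF (insert (i, j) E)) :
    (SAT (olfC (insert (i, j) E)) i : ℤ) - SAT (olfC E) i =
      (SAT (olfC E) j : ℤ) - SAT (olfC (insert (i, j) E)) j :=
  olf_opposite_gain_general n E i j hjP
end
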